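/- For any biconed graph G^{A,B} there is a bijection between the set of spanning trees of G^{A,B} and the set of birooted forests of G^{A,B}_red. -/

import Mathlib

/-!
Formalization scaffold for "h-vectors of graphic matroids of biconed graphs".

A graph `G` (loops and parallel edges allowed) with vertex set `A ∪ B` is
modelled by an abstract finite edge type `E` with an endpoint map
`ends : E → Sym2 (Fin m ⊕ₗ Fin n)`, where `A = Fin m = {1,…,m}`,
`Ā = B \ A = Fin n = {1̄,…,n̄}` and the finset `S ⊆ Fin m` records `A ∩ B`
(so `B = S ∪ Ā`).  The biconing `G^{A,B}` adds the two vertices `0` and `0̄`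
and the edges `00̄`, `0a (a ∈ A)` and `0̄b (b ∈ B)`.
-/

namespace BiconedPaper

noncomputable section
open scoped Classical

/-! ### Walks in multigraphs presented by an endpoint map -/

/-- A walk in the multigraph with edge set `ε` and endpoint map `ends`. -/
inductive MWalk {ε ν : Type} (ends : ε → Sym2 ν) : ν → ν → Type
  | nil (u : ν) : MWalk ends u u
  | cons {u w : ν} (e : ε) (v : ν) (h : ends e = s(u, v)) (p : MWalk ends v w) :
      MWalk ends u w

namespace MWalk

variable {ε ν : Type} {ends : ε → Sym2 ν}

/-- The list of edges traversed by a walk. -/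
def edges : ∀ {u v : ν}, MWalk ends u v → List ε
  | _, _, nil _ => []
  | _, _, cons e _ _ p => e :: p.edges

/-- The list of vertices visited by a walk. -/
def support : ∀ {u v : ν}, MWalk ends u v → List ν
  | u, _, nil _ => [u]
  | u, _, cons _ _ _ p => u :: p.support

/-- A walk is a path if it visits no vertex twice. -/
def IsPath {u v : ν} (p : MWalk ends u v) : Prop := p.support.Nodup

/-- All edges of the walk belong to the edge set `F`. -/
def edgesIn {u v : ν} (p : MWalk ends u v) (F : Finset ε) : Prop :=
  ∀ e ∈ p.edges, e ∈ F

/-- The number of "bridging" edges traversed by a walk, i.e. steps whose two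
endpoints lie on different sides according to `sideF`. -/
def bridgeCount (sideF : ν → Bool) : ∀ {u v : ν}, MWalk ends u v → ℕ
  | _, _, nil _ => 0
  | u, _, cons _ v' _ p => (if sideF u = sideF v' then 0 else 1) + p.bridgeCount sideF

end MWalk

/-- `u` and `v` are joined by a walk all of whose edges lie in `F`. -/
def Reachable {ε ν : Type} (ends : ε → Sym2 ν) (F : Finset ε) (u v : ν) : Prop :=
  ∃ p : MWalk ends u v, p.edgesIn F

/-- An edge set is acyclic (a forest) iff removing any one of its edges
disconnects the endpoints of that edge.  (In particular no loops and no
parallel pairs.) -/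
def IsAcyclic {ε ν : Type} [DecidableEq ε] (ends : ε → Sym2 ν) (F : Finset ε) : Prop :=
  ∀ e ∈ F, ∀ u v : ν, ends e = s(u, v) → ¬ Reachable ends (F.erase e) u v

/-- A spanning tree: an acyclic edge set connecting every pair of vertices. -/
def IsSpanningTree {ε ν : Type} [DecidableEq ε] (ends : ε → Sym2 ν) (T : Finset ε) : Prop :=
  IsAcyclic ends T ∧ ∀ u v : ν, Reachable ends T u v

/-! ### Biconed graphs -/

/-- The data of a biconed graph `G^{A,B}`:  the graph `G` has vertex set
`A ∪ B` with `A = Fin m`, `Ā = B \ A = Fin n`, `A ∩ B = S`, and abstract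
edge set `E` (so loops and parallel edges are allowed). -/
structure BiconedGraph where
  m : ℕ
  n : ℕ
  E : Type
  fintypeE : Fintype E
  decEqE : DecidableEq E
  ends : E → Sym2 (Fin m ⊕ₗ Fin n)
  S : Finset (Fin m)

namespace BiconedGraph

variable (P : BiconedGraph)

instance : Fintype P.E := P.fintypeE
instance : DecidableEq P.E := P.decEqE

/-- The vertices of `G`, linearly ordered `1 < ⋯ < m < 1̄ < ⋯ < n̄`. -/
abbrev VG := Fin P.m ⊕ₗ Fin P.n

/-- The vertices of `G^{A,B}_red`:  `⊥` is the vertex `0̄`, ordered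
`0̄ < 1 < ⋯ < m < 1̄ < ⋯ < n̄`. -/
abbrev Vred := WithBot P.VG

/-- The vertices of `G^{A,B}`: `⊥` is `0`, ordered `0 < 0̄ < 1 < ⋯ < n̄`. -/
abbrev W := WithBot P.Vred

/-- The vertex `a ∈ A`. -/
def aVert (a : Fin P.m) : P.VG := toLex (Sum.inl a)
/-- The vertex `b ∈ Ā`. -/
def bVert (b : Fin P.n) : P.VG := toLex (Sum.inr b)
/-- Inclusion of the vertices of `G` into those of `G^{A,B}_red`. -/
def liftV (x : P.VG) : P.Vred := (x : WithBot P.VG)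
/-- Inclusion of the vertices of `G^{A,B}_red` into those of `G^{A,B}`. -/
def liftW (x : P.Vred) : P.W := (x : WithBot P.Vred)

/-- The edges of the biconed graph `G^{A,B}`:  the edge `00̄`, the coning
edges `0a (a ∈ A)`, `0̄b (b ∈ Ā)`, `0̄a (a ∈ A ∩ B)`, and the edges of `G`. -/
abbrev EB := Unit ⊕ (Fin P.m ⊕ (Fin P.n ⊕ ({a : Fin P.m // a ∈ P.S} ⊕ P.E)))

/-- The edge `00̄`. -/
abbrev e00 : P.EB := Sum.inl ()
/-- The coning edge `0a`, `a ∈ A`. -/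
abbrev eA (a : Fin P.m) : P.EB := Sum.inr (Sum.inl a)
/-- The coning edge `0̄b`, `b ∈ Ā`. -/
abbrev eB (b : Fin P.n) : P.EB := Sum.inr (Sum.inr (Sum.inl b))
/-- The coning edge `0̄a`, `a ∈ A ∩ B`. -/
abbrev eS (a : {a : Fin P.m // a ∈ P.S}) : P.EB := Sum.inr (Sum.inr (Sum.inr (Sum.inl a)))
/-- An original edge of `G`. -/
abbrev eG (e : P.E) : P.EB := Sum.inr (Sum.inr (Sum.inr (Sum.inr e)))

/-- The endpoint map of `G^{A,B}`. -/
def endsB : P.EB → Sym2 P.W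
  | Sum.inl _ => s((⊥ : P.W), P.liftW ⊥)
  | Sum.inr (Sum.inl a) => s((⊥ : P.W), P.liftW (P.liftV (P.aVert a)))
  | Sum.inr (Sum.inr (Sum.inl b)) => s(P.liftW ⊥, P.liftW (P.liftV (P.bVert b)))
  | Sum.inr (Sum.inr (Sum.inr (Sum.inl a))) => s(P.liftW ⊥, P.liftW (P.liftV (P.aVert a.1)))
  | Sum.inr (Sum.inr (Sum.inr (Sum.inr e))) => (P.ends e).map fun x => P.liftW (P.liftV x)

/-- The spanning tree `T₀`, consisting of `00̄`, the edges `0a (a ∈ A)` and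
the edges `0̄b (b ∈ Ā)`. -/
def T0 : Finset P.EB :=
  Finset.univ.filter fun e => match e with
    | Sum.inl _ => True
    | Sum.inr (Sum.inl _) => True
    | Sum.inr (Sum.inr (Sum.inl _)) => True
    | _ => False

/-- The edges of `G^{A,B}_red` (delete the edges of `T₀` and the vertex `0`):
the edges `0̄a (a ∈ A ∩ B)` together with the edges of `G`. -/
abbrev Ered := {a : Fin P.m // a ∈ P.S} ⊕ P.E

/-- The endpoint map of `G^{A,B}_red`; `⊥` is the vertex `0̄`. -/
def endsRed : P.Ered → Sym2 P.Vred
  | Sum.inl a => s((⊥ : P.Vred), P.liftV (P.aVert a.1))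
  | Sum.inr e => (P.ends e).map P.liftV

/-- Inclusion of the edges of `G^{A,B}_red` into those of `G^{A,B}`. -/
def redToEB : P.Ered → P.EB
  | Sum.inl a => P.eS a
  | Sum.inr e => P.eG e

/-- The edge set `T \ T₀` of `T`, viewed inside `G^{A,B}_red`. -/
def redOf (T : Finset P.EB) : Finset P.Ered :=
  Finset.univ.filter fun e => P.redToEB e ∈ T

/-- `true` on the vertices of `A`, `false` on the vertices of `Ā ∪ {0̄}`. -/
def side : P.Vred → Bool :=
  WithBot.recBotCoe false fun x => Sum.elim (fun _ => true) (fun _ => false) (ofLex x)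

/-- The vertex lies in `A`. -/
def InA (v : P.Vred) : Prop := ∃ a : Fin P.m, v = P.liftV (P.aVert a)

/-- An edge of `G^{A,B}_red` is bridging if it joins a vertex of `A` to a
vertex of `Ā ∪ {0̄}`. -/
def BridgingE (e : P.Ered) : Prop :=
  ∃ u v : P.Vred, P.endsRed e = s(u, v) ∧ P.side u ≠ P.side v

/-! ### 2-edge-rooted forests -/

/-- The underlying edge set `F` of the multiset of edges given by the
multiplicity function `mult` (an edge `e` carries `mult e - 1` edge roots). -/
def mSupport (mult : P.Ered → ℕ) : Finset P.Ered :=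
  Finset.univ.filter fun e => mult e ≠ 0

/-- The degree of the multiset of edges given by `mult`. -/
def deg (mult : P.Ered → ℕ) : ℕ := ∑ e : P.Ered, mult e

/-- Edge `e` meets the connected component of `v` in the edge set `F`. -/
def Touches (F : Finset P.Ered) (v : P.Vred) (e : P.Ered) : Prop :=
  ∃ u : P.Vred, u ∈ P.endsRed e ∧ Reachable P.endsRed F v u

/-- The total number of edge roots in the component of `v`. -/
def compEdgeRoots (mult : P.Ered → ℕ) (v : P.Vred) : ℕ :=
  ∑ e ∈ P.mSupport mult, if P.Touches (P.mSupport mult) v e then mult e - 1 else 0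

/-- The component of `v` is `compCount`-edge-rooted:  the number of its edge
roots, plus `1` if it contains the vertex `0̄`. -/
def compCount (mult : P.Ered → ℕ) (v : P.Vred) : ℕ :=
  P.compEdgeRoots mult v +
    if Reachable P.endsRed (P.mSupport mult) v (⊥ : P.Vred) then 1 else 0

/-- Condition (C3) for the `2`-edge-rooted component of `v`:  the unique
shortest path containing both edge roots (resp. the vertex `0̄` and the edge
root, if the component contains `0̄`) has an odd number of bridging edges.
The shortest path containing two edges is the unique path whose first and
last edges are the two rooted edges; if the two edge roots lie on one common
edge (`mult e = 3`) the path is that single edge. -/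
def C3At (mult : P.Ered → ℕ) (v : P.Vred) : Prop :=
  (Reachable P.endsRed (P.mSupport mult) v (⊥ : P.Vred) →
    ∃ (x : P.Vred) (p : MWalk P.endsRed (⊥ : P.Vred) x),
      p.IsPath ∧ p.edgesIn (P.mSupport mult) ∧
      (∃ e, p.edges.getLast? = some e ∧ 2 ≤ mult e) ∧
      Odd (p.bridgeCount P.side)) ∧
  (¬ Reachable P.endsRed (P.mSupport mult) v (⊥ : P.Vred) →
    ∃ (x y : P.Vred) (p : MWalk P.endsRed x y),
      p.IsPath ∧ p.edgesIn (P.mSupport mult) ∧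
      Reachable P.endsRed (P.mSupport mult) v x ∧
      (∃ e, p.edges.head? = some e ∧ 2 ≤ mult e) ∧
      (∃ e, p.edges.getLast? = some e ∧ 2 ≤ mult e) ∧
      (∀ e, p.edges = [e] → mult e = 3) ∧
      Odd (p.bridgeCount P.side))

/-- `mult : Ered → ℕ` is (the multiplicity function of) a 2-edge-rooted
forest of `G^{A,B}_red`:
(C0) its support is a spanning forest;
(C1) at most one component is `2`-edge-rooted;
(C2) every other component is `0`- or `1`-edge-rooted;
(C3) the parity condition on the path joining the two roots. -/
def Is2ERF (mult : P.Ered → ℕ) : Prop :=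
  IsAcyclic P.endsRed (P.mSupport mult) ∧
  (∀ v : P.Vred, P.compCount mult v ≤ 2) ∧
  (∀ u v : P.Vred, P.compCount mult u = 2 → P.compCount mult v = 2 →
    Reachable P.endsRed (P.mSupport mult) u v) ∧
  (∀ v : P.Vred, P.compCount mult v = 2 → P.C3At mult v)

/-! ### Birooted forests -/

/-- `(F, R)` is a birooted forest of `G^{A,B}_red`:  `F` is a spanning forest,
the root set `R` contains `0̄`, every component of `F` contains at least one
root, no component contains three roots, at most one component contains two
roots, and a component with two roots has one root in `A` and the other in
`Ā ∪ {0̄}`. -/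
def IsBirootedForest (F : Finset P.Ered) (R : Set P.Vred) : Prop :=
  IsAcyclic P.endsRed F ∧
  (⊥ : P.Vred) ∈ R ∧
  (∀ v : P.Vred, ∃ r ∈ R, Reachable P.endsRed F v r) ∧
  (∀ r₁ ∈ R, ∀ r₂ ∈ R, ∀ r₃ ∈ R, r₁ ≠ r₂ → r₁ ≠ r₃ → r₂ ≠ r₃ →
    Reachable P.endsRed F r₁ r₂ → Reachable P.endsRed F r₁ r₃ → False) ∧
  (∀ r₁ ∈ R, ∀ r₂ ∈ R, ∀ r₃ ∈ R, ∀ r₄ ∈ R, r₁ ≠ r₂ → r₃ ≠ r₄ →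
    Reachable P.endsRed F r₁ r₂ → Reachable P.endsRed F r₃ r₄ →
    Reachable P.endsRed F r₁ r₃) ∧
  (∀ r₁ ∈ R, ∀ r₂ ∈ R, r₁ ≠ r₂ → Reachable P.endsRed F r₁ r₂ →
    (P.InA r₁ ∧ ¬ P.InA r₂) ∨ (P.InA r₂ ∧ ¬ P.InA r₁))

/-! ### Internal activity and the edge order -/

/-- `e` is internally passive in the spanning tree `T`:  it can be exchanged
for a strictly smaller edge `f` so that the result is again a spanning tree. -/
def InternallyPassive (ord : LinearOrder P.EB) (T : Finset P.EB) (e : P.EB) : Prop :=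
  e ∈ T ∧ ∃ f : P.EB, ord.lt f e ∧ IsSpanningTree P.endsB (insert f (T.erase e))

/-- `e` is internally active in the spanning tree `T`. -/
def InternallyActive (ord : LinearOrder P.EB) (T : Finset P.EB) (e : P.EB) : Prop :=
  e ∈ T ∧ ¬ ∃ f : P.EB, ord.lt f e ∧ IsSpanningTree P.endsB (insert f (T.erase e))

/-- The number of internally passive edges of `T`. -/
def ipCount (ord : LinearOrder P.EB) (T : Finset P.EB) : ℕ :=
  (T.filter fun e => P.InternallyPassive ord T e).card

/-- The smaller endpoint of an edge of `G^{A,B}`. -/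
def endMin (e : P.EB) : P.W := Sym2.lift ⟨fun a b => a ⊓ b, fun a b => inf_comm a b⟩ (P.endsB e)
/-- The larger endpoint of an edge of `G^{A,B}`. -/
def endMax (e : P.EB) : P.W := Sym2.lift ⟨fun a b => a ⊔ b, fun a b => sup_comm a b⟩ (P.endsB e)

/-- The endpoints of an edge, as an ordered pair in the lexicographic square
of the vertex order `0 < 0̄ < 1 < ⋯ < m < 1̄ < ⋯ < n̄`. -/
def lexEnds (e : P.EB) : P.W ×ₗ P.W := toLex (P.endMin e, P.endMax e)

/-- A linear order on the edges of `G^{A,B}` is admissible if it refines the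
lexicographic order on endpoints (so parallel edges are ordered arbitrarily). -/
def AdmissibleOrder (ord : LinearOrder P.EB) : Prop :=
  ∀ e f : P.EB, P.lexEnds e < P.lexEnds f → ord.lt e f

/-- `v` is a connecting vertex of `T`:  `v ∈ A` and `v` is adjacent to `0` in
`T`, or `v ∈ Ā` and `v` is adjacent to `0̄` in `T`. -/
def ConnVertex (T : Finset P.EB) (v : P.Vred) : Prop :=
  (∃ a : Fin P.m, v = P.liftV (P.aVert a) ∧ P.eA a ∈ T) ∨
  (∃ b : Fin P.n, v = P.liftV (P.bVert b) ∧ P.eB b ∈ T)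

/-- `e` is a connecting edge of `T` (an edge `0a`, `a ∈ A`, or `0̄b`, `b ∈ Ā`)
with connecting vertex `v`. -/
def ConnEdge (T : Finset P.EB) (e : P.EB) (v : P.Vred) : Prop :=
  e ∈ T ∧ ((∃ a : Fin P.m, e = P.eA a ∧ v = P.liftV (P.aVert a)) ∨
           (∃ b : Fin P.n, e = P.eB b ∧ v = P.liftV (P.bVert b)))

/-! ### The h-vector -/

/-- `f_{i-1}`:  the number of acyclic edge sets of cardinality `i` in `G^{A,B}`. -/
def numAcyclic (i : ℕ) : ℕ :=
  Nat.card {F : Finset P.EB // IsAcyclic P.endsB F ∧ F.card = i}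

/-- The rank of the graphic matroid of `G^{A,B}`:  `|V| - 1 = m + n + 1`. -/
def d : ℕ := P.m + P.n + 1

/-- `h` is the h-vector of the graphic matroid of `G^{A,B}`:  it satisfies
`Σ_{i=0}^{d} f_{i-1} (t-1)^{d-i} = Σ_{k=0}^{d} h_k t^{d-k}`. -/
def IsHVector (h : ℕ → ℤ) : Prop :=
  ∑ i ∈ Finset.range (P.d + 1),
      Polynomial.C ((P.numAcyclic i : ℤ)) * (Polynomial.X - 1) ^ (P.d - i)
    = ∑ k ∈ Finset.range (P.d + 1), Polynomial.C (h k) * Polynomial.X ^ (P.d - k)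

end BiconedGraph

/-- `(h 0, …, h d)` is a pure O-sequence:  there is a multicomplex `M` of
multisets on a finite ground set (nonempty, closed under sub-multisets), all
of whose inclusion-maximal members have the same cardinality, whose members
all have cardinality at most `d`, and which has exactly `h i` members of
cardinality `i` for every `i ≤ d`. -/
def IsPureOSeq (d : ℕ) (h : ℕ → ℤ) : Prop :=
  ∃ (N : ℕ) (M : Set (Multiset (Fin N))),
    M.Nonempty ∧
    (∀ s ∈ M, ∀ t : Multiset (Fin N), t ≤ s → t ∈ M) ∧
    (∀ s ∈ M, ∀ t ∈ M, (∀ u ∈ M, s ≤ u → u = s) → (∀ u ∈ M, t ≤ u → u = t) →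
      Multiset.card s = Multiset.card t) ∧
    (∀ s ∈ M, Multiset.card s ≤ d) ∧
    (∀ i ≤ d, (Nat.card {s : Multiset (Fin N) // s ∈ M ∧ Multiset.card s = i} : ℤ) = h i)

/-!
A spanning tree `T` of `G^{A,B}` is determined by three pieces of data: its edges `F` inside
`G^{A,B}_red`, its roots `R` (the vertex `0̄` together with the vertices joined by an edge of `T`
to the hub `0`, for `a ∈ A`, or to the hub `0̄`, for `b ∈ Ā`), and whether `00̄ ∈ T`.
Reachability in such an edge set has an explicit description (`reachable_iff_link`): two
vertices are joined iff they are joined in `F`, or their components hang from hubs which are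
equal or linked, either by `00̄` or through a component reaching roots on both sides.
Reading connectivity and acyclicity of `T` through this description gives exactly the axioms
of a birooted forest `(F, R)`, and `00̄ ∈ T` iff `(F, R)` has no birooted component.
-/

section Reachability

variable {ε ν : Type} {ends : ε → Sym2 ν} {F F' : Finset ε} {u v w : ν}

def Adj (ends : ε → Sym2 ν) (F : Finset ε) (u v : ν) : Prop :=
  ∃ e ∈ F, ends e = s(u, v)

theorem reachable_iff_reflTransGen :
    Reachable ends F u v ↔ Relation.ReflTransGen (Adj ends F) u v := by
  constructor
  · rintro ⟨p, hp⟩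
    induction p with
    | nil => exact .refl
    | cons e _ h _ ih =>
      exact .head ⟨e, hp e List.mem_cons_self, h⟩ (ih fun f hf => hp f (List.mem_cons_of_mem _ hf))
  · intro h
    induction h using Relation.ReflTransGen.head_induction_on with
    | refl => exact ⟨.nil _, fun _ he => absurd he List.not_mem_nil⟩
    | head hadj _ ih =>
      obtain ⟨e, he, hends⟩ := hadj
      obtain ⟨p, hp⟩ := ih
      exact ⟨.cons e _ hends p, fun f hf => (List.mem_cons.mp hf).elim (· ▸ he) (hp f)⟩

namespace Reachable

theorem refl (u : ν) : Reachable ends F u u :=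
  reachable_iff_reflTransGen.mpr .refl

theorem single {e : ε} (he : e ∈ F) (h : ends e = s(u, v)) : Reachable ends F u v :=
  reachable_iff_reflTransGen.mpr (.single ⟨e, he, h⟩)

theorem trans (huv : Reachable ends F u v) (hvw : Reachable ends F v w) :
    Reachable ends F u w :=
  reachable_iff_reflTransGen.mpr
    ((reachable_iff_reflTransGen.mp huv).trans (reachable_iff_reflTransGen.mp hvw))

theorem symm (h : Reachable ends F u v) : Reachable ends F v u := by
  rw [reachable_iff_reflTransGen] at h ⊢
  induction h with
  | refl => exact .refl
  | tail _ hadj ih =>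
    obtain ⟨e, he, hends⟩ := hadj
    exact ih.head ⟨e, he, hends.trans Sym2.eq_swap⟩

theorem mono (hF : F ⊆ F') (h : Reachable ends F u v) : Reachable ends F' u v :=
  reachable_iff_reflTransGen.mpr <| Relation.ReflTransGen.mono
    (fun _ _ ⟨e, he, hends⟩ => ⟨e, hF he, hends⟩) _ _ (reachable_iff_reflTransGen.mp h)

theorem map {ε' ν' : Type} {ends' : ε' → Sym2 ν'} {F' : Finset ε'} (φ : ε → ε') (f : ν → ν')
    (hφ : ∀ e ∈ F, φ e ∈ F' ∧ ends' (φ e) = (ends e).map f) (h : Reachable ends F u v) :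
    Reachable ends' F' (f u) (f v) :=
  reachable_iff_reflTransGen.mpr <| (reachable_iff_reflTransGen.mp h).lift f
    fun _ _ ⟨e, he, hends⟩ => ⟨φ e, (hφ e he).1, by rw [(hφ e he).2, hends, Sym2.map_mk]⟩

theorem rel {r : ν → ν → Prop} (hrefl : ∀ x, r x x) (hsymm : ∀ x y, r x y → r y x)
    (htrans : ∀ x y z, r x y → r y z → r x z)
    (hedge : ∀ e ∈ F, ∃ x y, ends e = s(x, y) ∧ r x y) (h : Reachable ends F u v) : r u v := by
  rw [reachable_iff_reflTransGen] at h
  induction h with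
  | refl => exact hrefl u
  | tail _ hadj ih =>
    obtain ⟨e, he, hends⟩ := hadj
    obtain ⟨x, y, hxy, hr⟩ := hedge e he
    refine htrans _ _ _ ih ?_
    rcases Sym2.eq_iff.mp (hxy.symm.trans hends) with ⟨rfl, rfl⟩ | ⟨rfl, rfl⟩
    exacts [hr, hsymm _ _ hr]

end Reachable

theorem isAcyclic_of_forall_exists [DecidableEq ε]
    (h : ∀ e ∈ F, ∃ x y, ends e = s(x, y) ∧ ¬ Reachable ends (F.erase e) x y) :
    IsAcyclic ends F := by
  intro e he u v huv hr
  obtain ⟨x, y, hxy, hn⟩ := h e he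
  rcases Sym2.eq_iff.mp (hxy.symm.trans huv) with ⟨rfl, rfl⟩ | ⟨rfl, rfl⟩
  exacts [hn hr, hn hr.symm]

end Reachability

namespace BiconedGraph

variable {P : BiconedGraph}

@[simp] lemma liftV_ne_bot (x : P.VG) : P.liftV x ≠ ⊥ := WithBot.coe_ne_bot

@[simp] lemma liftV_inj {x y : P.VG} : P.liftV x = P.liftV y ↔ x = y := WithBot.coe_inj

@[simp] lemma liftW_ne_bot (u : P.Vred) : P.liftW u ≠ ⊥ := WithBot.coe_ne_bot

@[simp] lemma liftW_inj {u v : P.Vred} : P.liftW u = P.liftW v ↔ u = v := WithBot.coe_inj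

lemma eq_bot_or_exists_liftV (v : P.Vred) : v = ⊥ ∨ ∃ x, v = P.liftV x := by
  induction v using WithBot.recBotCoe with
  | bot => exact Or.inl rfl
  | coe x => exact Or.inr ⟨x, rfl⟩

lemma eq_bot_or_exists_liftW (x : P.W) : x = ⊥ ∨ ∃ u, x = P.liftW u := by
  induction x using WithBot.recBotCoe with
  | bot => exact Or.inl rfl
  | coe u => exact Or.inr ⟨u, rfl⟩

lemma inA_iff_side {v : P.Vred} : P.InA v ↔ P.side v = true := by
  rcases eq_bot_or_exists_liftV v with rfl | ⟨x, rfl⟩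
  · simp [InA, side, eq_comm (a := (⊥ : P.Vred))]
  · obtain ⟨y, rfl⟩ := toLex.surjective x
    rcases y with a | b <;> simp [InA, side, liftV, aVert]

/-- `hub true` is the vertex `0` and `hub false` the vertex `0̄`. -/
def hub (P : BiconedGraph) : Bool → P.W
  | true => ⊥
  | false => P.liftW ⊥

def hubEdge (P : BiconedGraph) (x : P.VG) : P.EB := Sum.elim P.eA P.eB (ofLex x)

lemma endsB_hubEdge (x : P.VG) :
    P.endsB (P.hubEdge x) = s(P.hub (P.side (P.liftV x)), P.liftW (P.liftV x)) := by
  obtain ⟨y, rfl⟩ := toLex.surjective x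
  rcases y with a | b <;> rfl

lemma endsB_redToEB (e : P.Ered) : P.endsB (P.redToEB e) = (P.endsRed e).map P.liftW := by
  rcases e with a | f
  · rfl
  · exact (Sym2.map_map ..).symm

lemma hubEdge_injective : Function.Injective P.hubEdge := by
  intro x y h
  obtain ⟨x, rfl⟩ := toLex.surjective x
  obtain ⟨y, rfl⟩ := toLex.surjective y
  rcases x with a | b <;> rcases y with a' | b' <;> simp_all [hubEdge]

lemma redToEB_injective : Function.Injective P.redToEB := by
  rintro (a | f) (a' | f') h <;> simp_all [redToEB]

lemma hubEdge_ne_e00 (x : P.VG) : P.hubEdge x ≠ P.e00 := by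
  obtain ⟨y, rfl⟩ := toLex.surjective x
  rcases y with a | b <;> simp [hubEdge]

lemma redToEB_ne_e00 (e : P.Ered) : P.redToEB e ≠ P.e00 := by
  rcases e with a | f <;> simp [redToEB]

lemma redToEB_ne_hubEdge (e : P.Ered) (x : P.VG) : P.redToEB e ≠ P.hubEdge x := by
  obtain ⟨y, rfl⟩ := toLex.surjective x
  rcases e with a | f <;> rcases y with b | b <;> simp [redToEB, hubEdge]

lemma eq_e00_or_hubEdge_or_redToEB (e : P.EB) :
    e = P.e00 ∨ (∃ x, e = P.hubEdge x) ∨ ∃ e₀, e = P.redToEB e₀ := by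
  rcases e with _ | a | b | a | f
  · exact Or.inl rfl
  · exact Or.inr (Or.inl ⟨P.aVert a, rfl⟩)
  · exact Or.inr (Or.inl ⟨P.bVert b, rfl⟩)
  · exact Or.inr (Or.inr ⟨.inl a, rfl⟩)
  · exact Or.inr (Or.inr ⟨.inr f, rfl⟩)

lemma exists_endsRed_eq (e : P.Ered) : ∃ u v, P.endsRed e = s(u, v) :=
  Sym2.inductionOn (f := fun z => ∃ u v, z = s(u, v)) _ fun u v => ⟨u, v, rfl⟩

section EdgeSets

variable {T : Finset P.EB} {e : P.EB} {e₀ : P.Ered} {x : P.VG} {u v : P.Vred}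

@[simp] lemma mem_redOf : e₀ ∈ P.redOf T ↔ P.redToEB e₀ ∈ T := by
  simp [redOf]

lemma redOf_erase_of_ne (h : ∀ e₀, P.redToEB e₀ ≠ e) : P.redOf (T.erase e) = P.redOf T := by
  ext; simp [h]

lemma redOf_erase_redToEB : P.redOf (T.erase (P.redToEB e₀)) = (P.redOf T).erase e₀ := by
  ext; simp [redToEB_injective.eq_iff]

lemma reachable_liftW (h : Reachable P.endsRed (P.redOf T) u v) :
    Reachable P.endsB T (P.liftW u) (P.liftW v) :=
  h.map P.redToEB P.liftW fun e he => ⟨mem_redOf.mp he, endsB_redToEB e⟩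

/-- `⊥ = 0̄` is a root vacuously; any other vertex is a root iff its hub edge lies in `T`. -/
def rootsOf (T : Finset P.EB) : Set P.Vred :=
  {v | ∀ x, v = P.liftV x → P.hubEdge x ∈ T}

@[simp] lemma bot_mem_rootsOf : (⊥ : P.Vred) ∈ rootsOf T :=
  fun x h => absurd h.symm (liftV_ne_bot x)

@[simp] lemma liftV_mem_rootsOf : P.liftV x ∈ rootsOf T ↔ P.hubEdge x ∈ T :=
  ⟨fun h => h x rfl, fun h _ hy => liftV_inj.mp hy ▸ h⟩

lemma rootsOf_erase_of_ne (h : ∀ x, P.hubEdge x ≠ e) : rootsOf (T.erase e) = rootsOf T := by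
  ext v
  rcases eq_bot_or_exists_liftV v with rfl | ⟨x, rfl⟩ <;> simp [h]

lemma rootsOf_erase_hubEdge : rootsOf (T.erase (P.hubEdge x)) = rootsOf T \ {P.liftV x} := by
  ext v
  rcases eq_bot_or_exists_liftV v with rfl | ⟨y, rfl⟩
  · simp [eq_comm (a := (⊥ : P.Vred))]
  · simp [hubEdge_injective.eq_iff, and_comm]

lemma e00_mem_erase (h : e ≠ P.e00) : P.e00 ∈ T.erase e ↔ P.e00 ∈ T := by
  simp [Finset.mem_erase, h.symm]

end EdgeSets

section Link

variable {F F' : Finset P.Ered} {R R' : Set P.Vred} {j : Prop} {h h₁ h₂ : Bool}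
  {r₁ r₂ u v : P.Vred} {x y z : P.W}

def ReachesRoot (F : Finset P.Ered) (R : Set P.Vred) (h : Bool) (u : P.Vred) : Prop :=
  ∃ r ∈ R, P.side r = h ∧ Reachable P.endsRed F u r

def BirootedAt (F : Finset P.Ered) (R : Set P.Vred) (u : P.Vred) : Prop :=
  ∀ h, ReachesRoot F R h u

def HasBirootedComponent (F : Finset P.Ered) (R : Set P.Vred) : Prop :=
  ∃ u, BirootedAt F R u

/-- `x` hangs from `hub h`: the vertex `0` hangs from itself, a vertex of `G^{A,B}_red` from the
hubs of the roots in its component. -/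
def Anchored (F : Finset P.Ered) (R : Set P.Vred) (h : Bool) : P.W → Prop :=
  WithBot.recBotCoe (h = true) (ReachesRoot F R h)

/-- Reachability in an edge set `T` of `G^{A,B}` with `F = redOf T`, `R = rootsOf T` and
`j = (00̄ ∈ T)`, see `reachable_iff_link`. -/
def Link (F : Finset P.Ered) (R : Set P.Vred) (j : Prop) (x y : P.W) : Prop :=
  (∃ u v, x = P.liftW u ∧ y = P.liftW v ∧ Reachable P.endsRed F u v) ∨
    ∃ h₁ h₂, Anchored F R h₁ x ∧ Anchored F R h₂ y ∧ (h₁ = h₂ ∨ j ∨ HasBirootedComponent F R)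

@[simp] lemma anchored_bot : Anchored F R h ⊥ ↔ h = true := Iff.rfl

lemma ReachesRoot.of_reachable (huv : Reachable P.endsRed F u v) (hv : ReachesRoot F R h v) :
    ReachesRoot F R h u :=
  let ⟨r, hr, hs, hvr⟩ := hv
  ⟨r, hr, hs, huv.trans hvr⟩

lemma ReachesRoot.mono (hF : F ⊆ F') (hR : R ⊆ R') (hu : ReachesRoot F R h u) :
    ReachesRoot F' R' h u :=
  let ⟨r, hr, hs, hur⟩ := hu
  ⟨r, hR hr, hs, hur.mono hF⟩

lemma BirootedAt.mono (hF : F ⊆ F') (hR : R ⊆ R') (hu : BirootedAt F R u) :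
    BirootedAt F' R' u :=
  fun h => (hu h).mono hF hR

lemma birootedAt_of_reachable (hr₁ : r₁ ∈ R) (hr₂ : r₂ ∈ R) (hs : P.side r₁ ≠ P.side r₂)
    (h₁ : Reachable P.endsRed F u r₁) (h₂ : Reachable P.endsRed F u r₂) : BirootedAt F R u := by
  intro h
  by_cases hh : P.side r₁ = h
  · exact ⟨r₁, hr₁, hh, h₁⟩
  · refine ⟨r₂, hr₂, ?_, h₂⟩
    revert hs hh
    cases P.side r₁ <;> cases P.side r₂ <;> cases h <;> simp

lemma birootedAt_bot (hbot : ⊥ ∈ R) (h : ReachesRoot F R true ⊥) : BirootedAt F R ⊥ := by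
  obtain ⟨r, hr, hs, hr'⟩ := h
  exact birootedAt_of_reachable hr hbot (by rw [hs]; nofun) hr' (.refl _)

lemma hasBirootedComponent_of_anchored (ha₁ : Anchored F R h₁ x) (ha₂ : Anchored F R h₂ x)
    (hne : h₁ ≠ h₂) : HasBirootedComponent F R := by
  rcases eq_bot_or_exists_liftW x with rfl | ⟨u, rfl⟩
  · exact absurd ((anchored_bot.mp ha₁).trans (anchored_bot.mp ha₂).symm) hne
  · obtain ⟨r₁, hr₁, rfl, hur₁⟩ := ha₁
    obtain ⟨r₂, hr₂, rfl, hur₂⟩ := ha₂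
    exact ⟨u, birootedAt_of_reachable hr₁ hr₂ hne hur₁ hur₂⟩

lemma anchored_hub (hbot : ⊥ ∈ R) (h : Bool) : Anchored F R h (P.hub h) := by
  cases h
  · exact ⟨⊥, hbot, rfl, .refl _⟩
  · rfl

lemma eq_or_hasBirootedComponent_of_anchored_hub (hbot : ⊥ ∈ R)
    (ha : Anchored F R h₁ (P.hub h)) : h₁ = h ∨ HasBirootedComponent F R := by
  cases h
  · cases h₁
    · exact Or.inl rfl
    · exact Or.inr ⟨⊥, birootedAt_bot hbot ha⟩
  · exact Or.inl ha

lemma Link.refl (x : P.W) : Link F R j x x := by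
  rcases eq_bot_or_exists_liftW x with rfl | ⟨u, rfl⟩
  · exact Or.inr ⟨true, true, rfl, rfl, Or.inl rfl⟩
  · exact Or.inl ⟨u, u, rfl, rfl, .refl u⟩

lemma Link.symm (hxy : Link F R j x y) : Link F R j y x := by
  rcases hxy with ⟨u, v, rfl, rfl, huv⟩ | ⟨h₁, h₂, hx, hy, hj⟩
  · exact Or.inl ⟨v, u, rfl, rfl, huv.symm⟩
  · exact Or.inr ⟨h₂, h₁, hy, hx, hj.imp Eq.symm id⟩

lemma Link.trans (hxy : Link F R j x y) (hyz : Link F R j y z) : Link F R j x z := by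
  rcases hxy with ⟨u, v, rfl, rfl, huv⟩ | ⟨h₁, h₂, hx, hy, hj₁₂⟩ <;>
    rcases hyz with ⟨v', w, hv, rfl, hvw⟩ | ⟨h₃, h₄, hy', hz, hj₃₄⟩
  · obtain rfl := liftW_inj.mp hv
    exact Or.inl ⟨u, w, rfl, rfl, huv.trans hvw⟩
  · exact Or.inr ⟨h₃, h₄, ReachesRoot.of_reachable huv hy', hz, hj₃₄⟩
  · subst hv
    exact Or.inr ⟨h₁, h₂, hx, ReachesRoot.of_reachable hvw.symm hy, hj₁₂⟩
  · refine Or.inr ⟨h₁, h₄, hx, hz, ?_⟩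
    by_cases h₂₃ : h₂ = h₃
    · subst h₂₃
      rcases hj₁₂ with rfl | hj
      exacts [hj₃₄, Or.inr hj]
    · exact Or.inr (Or.inr (hasBirootedComponent_of_anchored hy hy' h₂₃))

lemma link_hub_liftW (hbot : ⊥ ∈ R) (hr : r₁ ∈ R) :
    Link F R j (P.hub (P.side r₁)) (P.liftW r₁) :=
  Or.inr ⟨_, _, anchored_hub hbot _, ⟨r₁, hr, rfl, .refl _⟩, Or.inl rfl⟩

lemma link_hub_hub (hbot : ⊥ ∈ R) (hj : j ∨ HasBirootedComponent F R) (h₁ h₂ : Bool) :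
    Link F R j (P.hub h₁) (P.hub h₂) :=
  Or.inr ⟨h₁, h₂, anchored_hub hbot h₁, anchored_hub hbot h₂, Or.inr hj⟩

lemma reachesRoot_of_link_hub (hbot : ⊥ ∈ R) (hl : Link F R j (P.hub h) (P.liftW v)) :
    ReachesRoot F R h v ∨ ((j ∨ HasBirootedComponent F R) ∧ ∃ h', ReachesRoot F R h' v) := by
  rcases hl with ⟨u, w, hu, hw, huw⟩ | ⟨h₁, h₂, ha₁, ha₂, hj⟩
  · obtain rfl := liftW_inj.mp hw
    cases h
    · obtain rfl : ⊥ = u := liftW_inj.mp hu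
      exact Or.inl ⟨⊥, hbot, rfl, huw.symm⟩
    · exact absurd hu.symm (liftW_ne_bot u)
  · rcases eq_or_hasBirootedComponent_of_anchored_hub hbot ha₁ with rfl | hbi
    · rcases hj with rfl | hj
      exacts [Or.inl ha₂, Or.inr ⟨hj, h₂, ha₂⟩]
    · exact Or.inr ⟨Or.inr hbi, h₂, ha₂⟩

end Link

section HubReachability

variable {T : Finset P.EB} {h : Bool} {r : P.Vred} {x y : P.W}

lemma reachable_hub_of_mem_rootsOf (hr : r ∈ rootsOf T) :
    Reachable P.endsB T (P.liftW r) (P.hub (P.side r)) := by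
  rcases eq_bot_or_exists_liftV r with rfl | ⟨x, rfl⟩
  · exact .refl _
  · exact (Reachable.single (liftV_mem_rootsOf.mp hr) (endsB_hubEdge x)).symm

lemma reachable_hub_of_anchored (hx : Anchored (P.redOf T) (rootsOf T) h x) :
    Reachable P.endsB T x (P.hub h) := by
  rcases eq_bot_or_exists_liftW x with rfl | ⟨u, rfl⟩
  · obtain rfl := anchored_bot.mp hx
    exact .refl _
  · obtain ⟨r, hr, rfl, hur⟩ := hx
    exact (reachable_liftW hur).trans (reachable_hub_of_mem_rootsOf hr)

lemma reachable_hub_hub (hj : P.e00 ∈ T ∨ HasBirootedComponent (P.redOf T) (rootsOf T))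
    (h₁ h₂ : Bool) : Reachable P.endsB T (P.hub h₁) (P.hub h₂) := by
  have hubs : Reachable P.endsB T (P.hub true) (P.hub false) := by
    rcases hj with he | ⟨u, hu⟩
    · exact .single he rfl
    · exact (reachable_hub_of_anchored (x := P.liftW u) (hu true)).symm.trans
        (reachable_hub_of_anchored (x := P.liftW u) (hu false))
  cases h₁ <;> cases h₂
  exacts [.refl _, hubs.symm, hubs, .refl _]

lemma exists_link_of_mem {e : P.EB} (he : e ∈ T) :
    ∃ x y, P.endsB e = s(x, y) ∧ Link (P.redOf T) (rootsOf T) (P.e00 ∈ T) x y := by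
  rcases eq_e00_or_hubEdge_or_redToEB e with rfl | ⟨x, rfl⟩ | ⟨e₀, rfl⟩
  · exact ⟨_, _, rfl, link_hub_hub bot_mem_rootsOf (Or.inl he) true false⟩
  · exact ⟨_, _, endsB_hubEdge x, link_hub_liftW bot_mem_rootsOf (liftV_mem_rootsOf.mpr he)⟩
  · obtain ⟨u, v, huv⟩ := exists_endsRed_eq e₀
    exact ⟨_, _, by rw [endsB_redToEB, huv, Sym2.map_mk],
      Or.inl ⟨u, v, rfl, rfl, .single (mem_redOf.mpr he) huv⟩⟩

theorem reachable_iff_link :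
    Reachable P.endsB T x y ↔ Link (P.redOf T) (rootsOf T) (P.e00 ∈ T) x y := by
  constructor
  · exact Reachable.rel Link.refl (fun _ _ => Link.symm) (fun _ _ _ => Link.trans)
      fun _ => exists_link_of_mem
  · rintro (⟨u, v, rfl, rfl, huv⟩ | ⟨h₁, h₂, hx, hy, hj⟩)
    · exact reachable_liftW huv
    · refine (reachable_hub_of_anchored hx).trans ((?_ : Reachable _ _ _ _).trans
        (reachable_hub_of_anchored hy).symm)
      rcases hj with rfl | hj
      exacts [.refl _, reachable_hub_hub hj h₁ h₂]

end HubReachability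

lemma isBirootedForest_of {F : Finset P.Ered} {R : Set P.Vred}
    (hac : IsAcyclic P.endsRed F) (hbot : ⊥ ∈ R)
    (hcover : ∀ v, ∃ r ∈ R, Reachable P.endsRed F v r)
    (heq : ∀ r₁ ∈ R, ∀ r₂ ∈ R, P.side r₁ = P.side r₂ → Reachable P.endsRed F r₁ r₂ → r₁ = r₂)
    (hbi : ∀ u w, BirootedAt F R u → BirootedAt F R w → Reachable P.endsRed F u w) :
    P.IsBirootedForest F R := by
  have hside : ∀ r₁ ∈ R, ∀ r₂ ∈ R, r₁ ≠ r₂ → Reachable P.endsRed F r₁ r₂ →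
      P.side r₁ ≠ P.side r₂ :=
    fun r₁ h₁ r₂ h₂ hne hr hs => hne (heq r₁ h₁ r₂ h₂ hs hr)
  refine ⟨hac, hbot, hcover, ?_, ?_, ?_⟩
  · intro r₁ h₁ r₂ h₂ r₃ h₃ h₁₂ h₁₃ h₂₃ hr₁₂ hr₁₃
    exact (by decide : ∀ a b c : Bool, a ≠ b → a ≠ c → b ≠ c → False) _ _ _
      (hside _ h₁ _ h₂ h₁₂ hr₁₂) (hside _ h₁ _ h₃ h₁₃ hr₁₃)
      (hside _ h₂ _ h₃ h₂₃ (hr₁₂.symm.trans hr₁₃))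
  · intro r₁ h₁ r₂ h₂ r₃ h₃ r₄ h₄ h₁₂ h₃₄ hr₁₂ hr₃₄
    exact hbi _ _ (birootedAt_of_reachable h₁ h₂ (hside _ h₁ _ h₂ h₁₂ hr₁₂) (.refl _) hr₁₂)
      (birootedAt_of_reachable h₃ h₄ (hside _ h₃ _ h₄ h₃₄ hr₃₄) (.refl _) hr₃₄)
  · intro r₁ h₁ r₂ h₂ hne hr
    simp only [inA_iff_side]
    exact (by decide : ∀ a b : Bool, a ≠ b → (a = true ∧ b ≠ true) ∨ (b = true ∧ a ≠ true)) _ _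
      (hside _ h₁ _ h₂ hne hr)

namespace IsBirootedForest

variable {F : Finset P.Ered} {R : Set P.Vred} {r₁ r₂ u w : P.Vred}

lemma eq_of_reachable (hB : P.IsBirootedForest F R) (h₁ : r₁ ∈ R) (h₂ : r₂ ∈ R)
    (hs : P.side r₁ = P.side r₂) (h : Reachable P.endsRed F r₁ r₂) : r₁ = r₂ := by
  by_contra hne
  rcases hB.2.2.2.2.2 r₁ h₁ r₂ h₂ hne h with ⟨hA, hA'⟩ | ⟨hA, hA'⟩ <;>
    simp_all [inA_iff_side]

lemma reachable_of_birootedAt (hB : P.IsBirootedForest F R) (hu : BirootedAt F R u)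
    (hw : BirootedAt F R w) : Reachable P.endsRed F u w := by
  obtain ⟨a₁, ha₁, hsa₁, hua₁⟩ := hu true
  obtain ⟨s₁, hs₁, hss₁, hus₁⟩ := hu false
  obtain ⟨a₂, ha₂, hsa₂, hwa₂⟩ := hw true
  obtain ⟨s₂, hs₂, hss₂, hws₂⟩ := hw false
  have hne : ∀ {a s : P.Vred}, P.side a = true → P.side s = false → a ≠ s := by
    rintro a s ha hs rfl
    simp_all
  exact hua₁.trans ((hB.2.2.2.2.1 a₁ ha₁ s₁ hs₁ a₂ ha₂ s₂ hs₂ (hne hsa₁ hss₁) (hne hsa₂ hss₂)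
    (hua₁.symm.trans hus₁) (hwa₂.symm.trans hws₂)).trans hwa₂.symm)

end IsBirootedForest

section SpanningTree

variable {T : Finset P.EB}

lemma isAcyclic_redOf (hT : IsAcyclic P.endsB T) : IsAcyclic P.endsRed (P.redOf T) := by
  intro e he u v huv hr
  refine hT _ (mem_redOf.mp he) _ _ (by rw [endsB_redToEB, huv, Sym2.map_mk]) ?_
  exact reachable_liftW (by rwa [redOf_erase_redToEB])

lemma not_link_hubEdge_of_isAcyclic (hT : IsAcyclic P.endsB T) {x : P.VG} (hx : P.hubEdge x ∈ T) :
    ¬ Link (P.redOf T) (rootsOf T \ {P.liftV x}) (P.e00 ∈ T)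
      (P.hub (P.side (P.liftV x))) (P.liftW (P.liftV x)) := by
  intro h
  refine hT _ hx _ _ (endsB_hubEdge x) (reachable_iff_link.mpr ?_)
  rwa [redOf_erase_of_ne fun e₀ => redToEB_ne_hubEdge e₀ x, rootsOf_erase_hubEdge,
    e00_mem_erase (hubEdge_ne_e00 x)]

lemma eq_of_mem_rootsOf (hT : IsAcyclic P.endsB T) {r₁ r₂ : P.Vred} (h₁ : r₁ ∈ rootsOf T)
    (h₂ : r₂ ∈ rootsOf T) (hs : P.side r₁ = P.side r₂)
    (h : Reachable P.endsRed (P.redOf T) r₁ r₂) : r₁ = r₂ := by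
  by_contra hne
  wlog hr₁ : r₁ ≠ ⊥ generalizing r₁ r₂
  · exact this h₂ h₁ hs.symm h.symm (Ne.symm hne) fun hr₂ => hne ((not_not.mp hr₁).trans hr₂.symm)
  obtain ⟨x, rfl⟩ := (eq_bot_or_exists_liftV r₁).resolve_left hr₁
  exact not_link_hubEdge_of_isAcyclic hT (liftV_mem_rootsOf.mp h₁) <| Or.inr
    ⟨_, _, anchored_hub (Set.mem_sdiff_of_mem bot_mem_rootsOf (liftV_ne_bot x).symm) _,
      ⟨r₂, ⟨h₂, Ne.symm hne⟩, hs.symm, h⟩, Or.inl rfl⟩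

lemma reachable_of_birootedAt_redOf (hT : IsAcyclic P.endsB T) {u w : P.Vred}
    (hu : BirootedAt (P.redOf T) (rootsOf T) u) (hw : BirootedAt (P.redOf T) (rootsOf T) w) :
    Reachable P.endsRed (P.redOf T) u w := by
  obtain ⟨a₁, ha₁, hsa₁, hua₁⟩ := hu true
  obtain ⟨a₂, ha₂, hsa₂, hwa₂⟩ := hw true
  suffices a₁ = a₂ by
    subst this
    exact hua₁.trans hwa₂.symm
  by_contra hne
  obtain ⟨x, rfl⟩ := (eq_bot_or_exists_liftV a₁).resolve_left
    (by rintro rfl; exact Bool.false_ne_true hsa₁)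
  have hmem : ∀ {r}, r ∈ rootsOf T → P.side r = false → r ∈ rootsOf T \ {P.liftV x} :=
    fun hr hs => ⟨hr, by rintro rfl; simp_all⟩
  obtain ⟨s₁, hs₁, hss₁, hus₁⟩ := hu false
  obtain ⟨s₂, hs₂, hss₂, hws₂⟩ := hw false
  apply not_link_hubEdge_of_isAcyclic hT (liftV_mem_rootsOf.mp ha₁)
  rw [hsa₁]
  refine Or.inr ⟨true, false, rfl, ⟨s₁, hmem hs₁ hss₁, hss₁, hua₁.symm.trans hus₁⟩,
    Or.inr (Or.inr ⟨w, fun h => ?_⟩)⟩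
  cases h
  exacts [⟨s₂, hmem hs₂ hss₂, hss₂, hws₂⟩, ⟨a₂, ⟨ha₂, Ne.symm hne⟩, hsa₂, hwa₂⟩]

lemma e00_mem_iff (hT : IsSpanningTree P.endsB T) :
    P.e00 ∈ T ↔ ¬ HasBirootedComponent (P.redOf T) (rootsOf T) := by
  constructor
  · intro he hbi
    refine hT.1 _ he (P.hub true) (P.hub false) rfl (reachable_iff_link.mpr ?_)
    rw [redOf_erase_of_ne redToEB_ne_e00, rootsOf_erase_of_ne hubEdge_ne_e00]
    exact link_hub_hub bot_mem_rootsOf (Or.inr hbi) true false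
  · intro hnb
    by_contra he
    rcases reachesRoot_of_link_hub (v := ⊥) bot_mem_rootsOf
      (reachable_iff_link.mp (hT.2 (P.hub true) (P.hub false))) with hr | ⟨hj, -⟩
    · exact hnb ⟨⊥, birootedAt_bot bot_mem_rootsOf hr⟩
    · exact hj.elim he hnb

lemma isBirootedForest_redOf_rootsOf (hT : IsSpanningTree P.endsB T) :
    P.IsBirootedForest (P.redOf T) (rootsOf T) := by
  refine isBirootedForest_of (isAcyclic_redOf hT.1) bot_mem_rootsOf (fun v => ?_)
    (fun _ h₁ _ h₂ => eq_of_mem_rootsOf hT.1 h₁ h₂) (fun _ _ => reachable_of_birootedAt_redOf hT.1)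
  rcases reachesRoot_of_link_hub bot_mem_rootsOf
    (reachable_iff_link.mp (hT.2 (P.hub true) (P.liftW v))) with
    ⟨r, hr, -, hvr⟩ | ⟨-, -, r, hr, -, hvr⟩
  exacts [⟨r, hr, hvr⟩, ⟨r, hr, hvr⟩]

end SpanningTree

def treeOf (F : Finset P.Ered) (R : Set P.Vred) : Finset P.EB :=
  Finset.univ.filter fun e => match e with
    | Sum.inl _ => ¬ HasBirootedComponent F R
    | Sum.inr (Sum.inl a) => P.liftV (P.aVert a) ∈ R
    | Sum.inr (Sum.inr (Sum.inl b)) => P.liftV (P.bVert b) ∈ R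
    | Sum.inr (Sum.inr (Sum.inr e)) => e ∈ F

section BirootedForest

variable {F : Finset P.Ered} {R : Set P.Vred}

@[simp] lemma mem_treeOf_e00 : P.e00 ∈ treeOf F R ↔ ¬ HasBirootedComponent F R := by
  simp [treeOf]

@[simp] lemma mem_treeOf_hubEdge {x : P.VG} : P.hubEdge x ∈ treeOf F R ↔ P.liftV x ∈ R := by
  obtain ⟨y, rfl⟩ := toLex.surjective x
  rcases y with a | b <;> simp only [treeOf, Finset.mem_filter, Finset.mem_univ, true_and] <;> rfl

@[simp] lemma mem_treeOf_redToEB {e₀ : P.Ered} : P.redToEB e₀ ∈ treeOf F R ↔ e₀ ∈ F := by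
  rcases e₀ with a | f <;> simp [treeOf, redToEB]

lemma redOf_treeOf : P.redOf (treeOf F R) = F := by
  ext; simp

lemma rootsOf_treeOf (hbot : ⊥ ∈ R) : rootsOf (treeOf F R) = R := by
  ext v
  rcases eq_bot_or_exists_liftV v with rfl | ⟨x, rfl⟩ <;> simp [hbot]

lemma treeOf_redOf_rootsOf {T : Finset P.EB} (hT : IsSpanningTree P.endsB T) :
    treeOf (P.redOf T) (rootsOf T) = T := by
  ext e
  rcases eq_e00_or_hubEdge_or_redToEB e with rfl | ⟨x, rfl⟩ | ⟨e₀, rfl⟩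
  · rw [mem_treeOf_e00, e00_mem_iff hT]
  · rw [mem_treeOf_hubEdge, liftV_mem_rootsOf]
  · rw [mem_treeOf_redToEB, mem_redOf]

variable (hB : P.IsBirootedForest F R)
include hB

lemma reachable_treeOf (x y : P.W) : Reachable P.endsB (treeOf F R) x y := by
  have hanchor : ∀ x : P.W, ∃ h, Anchored F R h x := by
    intro x
    rcases eq_bot_or_exists_liftW x with rfl | ⟨v, rfl⟩
    · exact ⟨true, rfl⟩
    · obtain ⟨r, hr, hvr⟩ := hB.2.2.1 v
      exact ⟨P.side r, r, hr, rfl, hvr⟩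
  obtain ⟨h₁, hx⟩ := hanchor x
  obtain ⟨h₂, hy⟩ := hanchor y
  rw [reachable_iff_link, redOf_treeOf, rootsOf_treeOf hB.2.1, mem_treeOf_e00]
  exact Or.inr ⟨h₁, h₂, hx, hy, Or.inr (em _).symm⟩

lemma not_link_hub_hub (hnb : ¬ HasBirootedComponent F R) :
    ¬ Link F R False (P.hub true) (P.hub false) := by
  intro hl
  rcases reachesRoot_of_link_hub (v := ⊥) hB.2.1 hl with hr | ⟨hj, -⟩
  · exact hnb ⟨⊥, birootedAt_bot hB.2.1 hr⟩
  · exact hj.elim id hnb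

lemma not_link_hub_root {r : P.Vred} (hr : r ∈ R) (hne : r ≠ ⊥) :
    ¬ Link F (R \ {r}) (¬ HasBirootedComponent F R) (P.hub (P.side r)) (P.liftW r) := by
  intro hl
  rcases reachesRoot_of_link_hub (Set.mem_sdiff_of_mem hB.2.1 hne.symm) hl with
    ⟨r', ⟨hr', hr'r⟩, hs, hrr'⟩ | ⟨hj, -, r', ⟨hr', hr'r⟩, -, hrr'⟩
  · exact hr'r (hB.eq_of_reachable hr' hr hs hrr'.symm)
  · have hs : P.side r ≠ P.side r' := fun hs => hr'r (hB.eq_of_reachable hr' hr hs.symm hrr'.symm)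
    have hbi : BirootedAt F R r := birootedAt_of_reachable hr hr' hs (.refl r) hrr'
    obtain ⟨w, hw⟩ := hj.resolve_left (not_not.mpr ⟨r, hbi⟩)
    obtain ⟨r'', ⟨hr'', hr''r⟩, hs'', hwr''⟩ := hw (P.side r)
    exact hr''r (hB.eq_of_reachable hr'' hr hs'' (hwr''.symm.trans
      (hB.reachable_of_birootedAt (hw.mono subset_rfl Set.sdiff_subset) hbi)))

lemma not_link_erase {e₀ : P.Ered} {u v : P.Vred} (he : e₀ ∈ F)
    (huv : P.endsRed e₀ = s(u, v)) :
    ¬ Link (F.erase e₀) R (¬ HasBirootedComponent F R) (P.liftW u) (P.liftW v) := by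
  have hcut : ¬ Reachable P.endsRed (F.erase e₀) u v := hB.1 e₀ he u v huv
  have hsub : F.erase e₀ ⊆ F := Finset.erase_subset _ _
  rintro (⟨u', v', hu, hv, h⟩ | ⟨h₁, h₂, ⟨r₁, hr₁, hs₁, hur₁⟩, ⟨r₂, hr₂, hs₂, hvr₂⟩, hj⟩)
  · rw [liftW_inj.mp hu, liftW_inj.mp hv] at hcut
    exact hcut h
  have hr₁₂ : Reachable P.endsRed F r₁ r₂ :=
    (hur₁.mono hsub).symm.trans ((Reachable.single he huv).trans (hvr₂.mono hsub))
  have hne : r₁ ≠ r₂ := by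
    rintro rfl
    exact hcut (hur₁.trans hvr₂.symm)
  have hs : P.side r₁ ≠ P.side r₂ := fun hs => hne (hB.eq_of_reachable hr₁ hr₂ hs hr₁₂)
  have hbi : BirootedAt F R r₁ := birootedAt_of_reachable hr₁ hr₂ hs (.refl _) hr₁₂
  obtain ⟨w, hw⟩ := (hj.resolve_left fun h => hs (hs₁.trans (h.trans hs₂.symm))).resolve_left
    (not_not.mpr ⟨r₁, hbi⟩)
  -- `w` lies in the birooted component of `F`, so its roots are `r₁` and `r₂`
  have hroot : ∀ r ∈ R, Reachable P.endsRed F r₁ r →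
      Reachable P.endsRed (F.erase e₀) w r := by
    intro r hr hr₁r
    obtain ⟨r', hr', hs', hwr'⟩ := hw (P.side r)
    obtain rfl : r' = r := hB.eq_of_reachable hr' hr hs' ((hwr'.mono hsub).symm.trans
      ((hB.reachable_of_birootedAt (hw.mono hsub subset_rfl) hbi).trans hr₁r))
    exact hwr'
  exact hcut (hur₁.trans ((hroot r₁ hr₁ (.refl _)).symm.trans
    ((hroot r₂ hr₂ hr₁₂).trans hvr₂.symm)))

lemma isAcyclic_treeOf : IsAcyclic P.endsB (treeOf F R) := by
  refine isAcyclic_of_forall_exists fun e he => ?_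
  rcases eq_e00_or_hubEdge_or_redToEB e with rfl | ⟨x, rfl⟩ | ⟨e₀, rfl⟩
  · refine ⟨_, _, rfl, fun h => not_link_hub_hub hB (mem_treeOf_e00.mp he) ?_⟩
    rwa [reachable_iff_link, redOf_erase_of_ne redToEB_ne_e00,
      rootsOf_erase_of_ne hubEdge_ne_e00, redOf_treeOf, rootsOf_treeOf hB.2.1,
      eq_false (Finset.notMem_erase _ _)] at h
  · refine ⟨_, _, endsB_hubEdge x, fun h =>
      not_link_hub_root hB (mem_treeOf_hubEdge.mp he) (liftV_ne_bot x) ?_⟩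
    rwa [reachable_iff_link, redOf_erase_of_ne fun e₀ => redToEB_ne_hubEdge e₀ x,
      rootsOf_erase_hubEdge, redOf_treeOf, rootsOf_treeOf hB.2.1,
      e00_mem_erase (hubEdge_ne_e00 x), mem_treeOf_e00] at h
  · obtain ⟨u, v, huv⟩ := exists_endsRed_eq e₀
    refine ⟨_, _, by rw [endsB_redToEB, huv, Sym2.map_mk], fun h =>
      not_link_erase hB (mem_treeOf_redToEB.mp he) huv ?_⟩
    rwa [reachable_iff_link, redOf_erase_redToEB,
      rootsOf_erase_of_ne fun x => (redToEB_ne_hubEdge e₀ x).symm, redOf_treeOf,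
      rootsOf_treeOf hB.2.1, e00_mem_erase (redToEB_ne_e00 e₀), mem_treeOf_e00] at h

lemma isSpanningTree_treeOf : IsSpanningTree P.endsB (treeOf F R) :=
  ⟨isAcyclic_treeOf hB, reachable_treeOf hB⟩

end BirootedForest

def spanningTreeEquiv (P : BiconedGraph) :
    {T : Finset P.EB // IsSpanningTree P.endsB T} ≃
      {FR : Finset P.Ered × Set P.Vred // P.IsBirootedForest FR.1 FR.2} where
  toFun T := ⟨(P.redOf T.1, rootsOf T.1), isBirootedForest_redOf_rootsOf T.2⟩
  invFun FR := ⟨treeOf FR.1.1 FR.1.2, isSpanningTree_treeOf FR.2⟩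
  left_inv T := Subtype.ext (treeOf_redOf_rootsOf T.2)
  right_inv FR := Subtype.ext (Prod.ext redOf_treeOf (rootsOf_treeOf FR.2.2.1))

end BiconedGraph

/-- Lemma 3.4.  For any biconed graph `G^{A,B}` there is a
bijection between the set of spanning trees of `G^{A,B}` and the set of
birooted forests of `G^{A,B}_red`. -/
theorem spanningTrees_equiv_birootedForests (P : BiconedGraph) :
    Nonempty ({T : Finset P.EB // IsSpanningTree P.endsB T} ≃
      {FR : Finset P.Ered × Set P.Vred // P.IsBirootedForest FR.1 FR.2}) :=
  ⟨P.spanningTreeEquiv⟩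

end

end BiconedPaper
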